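/- Let S be a nonempty finite set and f, g : S → ℝ be strictly positive, and set w_s = f(s)/Σ_{s'∈S} f(s'). If Σ_{s∈S} w_s·log g(s) ≥ Σ_{s∈S} w_s·log f(s), then Σ_{s∈S} g(s) ≥ Σ_{s∈S} f(s), and hence log(Σ_s g(s)) ≥ log(Σ_s f(s)). -/
import Mathlib

/-- Ascent property of the (generalized) EM algorithm for finite latent-variable
models: with posterior weights `w_s = f(s)/Σ f`, if
`Σ_s w_s·log g(s) ≥ Σ_s w_s·log f(s)` then `Σ g ≥ Σ f`, and hence
`log(Σ g) ≥ log(Σ f)`. -/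
theorem em_ascent {S : Type*} [Fintype S] [Nonempty S]
    (f g : S → ℝ) (hf : ∀ s, 0 < f s) (hg : ∀ s, 0 < g s)
    (hQ : ∑ s, (f s / ∑ s', f s') * Real.log (g s) ≥
      ∑ s, (f s / ∑ s', f s') * Real.log (f s)) :
    (∑ s, g s ≥ ∑ s, f s) ∧ Real.log (∑ s, g s) ≥ Real.log (∑ s, f s) := by
  set F := ∑ s', f s' with hFdef
  have hF : 0 < F := Finset.sum_pos (fun s _ => hf s) Finset.univ_nonempty
  have hG : 0 < ∑ s, g s := Finset.sum_pos (fun s _ => hg s) Finset.univ_nonempty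
  have hw0 : ∀ s ∈ Finset.univ (α := S), (0:ℝ) ≤ f s / F :=
    fun s _ => le_of_lt (div_pos (hf s) hF)
  have hw1 : ∑ s, f s / F = 1 := by
    rw [← Finset.sum_div, hFdef, div_self hF.ne']
  have jensen : ∑ s, (f s / F) • Real.log (g s / f s) ≤
      Real.log (∑ s, (f s / F) • (g s / f s)) := by
    refine (strictConcaveOn_log_Ioi.concaveOn).le_map_sum hw0 hw1 ?_
    intro s _
    exact Set.mem_Ioi.mpr (div_pos (hg s) (hf s))
  have hsum : ∑ s, (f s / F) • (g s / f s) = (∑ s, g s) / F := by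
    rw [Finset.sum_div]
    refine Finset.sum_congr rfl fun s _ => ?_
    rw [smul_eq_mul, div_mul_div_comm, mul_comm F (f s),
      mul_div_mul_left _ _ (hf s).ne']
  have hlhs : (0:ℝ) ≤ ∑ s, (f s / F) • Real.log (g s / f s) := by
    have : ∑ s, (f s / F) • Real.log (g s / f s)
        = ∑ s, (f s / F) * Real.log (g s) - ∑ s, (f s / F) * Real.log (f s) := by
      rw [← Finset.sum_sub_distrib]
      refine Finset.sum_congr rfl fun s _ => ?_
      rw [Real.log_div (hg s).ne' (hf s).ne', smul_eq_mul, mul_sub]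
    rw [this]
    linarith [hQ]
  have hlog : (0:ℝ) ≤ Real.log ((∑ s, g s) / F) := by
    rw [← hsum]; linarith [jensen]
  have h1 : (1:ℝ) ≤ (∑ s, g s) / F := by
    by_contra h
    push_neg at h
    have := Real.log_neg (div_pos hG hF) h
    linarith
  have hmain : ∑ s, g s ≥ F := by
    have := (one_le_div hF).mp h1
    linarith
  exact ⟨hmain, Real.log_le_log hF hmain⟩
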